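/- Let d ≥ 1, λ > 0, and let x : Fin d → Fin d be a sequence of episode outcomes such that for every t ∈ Fin d, writing N_t j := #{u ∈ Fin d : u < t and x u = j} for the counts of outcomes before episode t, the outcome x t maximizes over s ∈ Fin d the post-addition coverage (Σ_{j ∈ Fin d} 1/(N_t j + (if j = s then 1 else 0) + λ))⁻¹. Then x is a bijection of Fin d; consequently the final counts satisfy #{u : x u = j} = 1 for every j, each outcome occurs with empirical frequency 1/d, and the final coverage equals (1 + λ)/d, which is the maximum of (Σ_j 1/(N j + λ))⁻¹ over all count vectors N : Fin d → ℕ with Σ_j N j = d. -/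

import Mathlib

/-!
Adding one visit to outcome `s` lowers `∑ j, 1 / (N j + λ)` by `1 / (N s + λ) - 1 / (N s + 1 + λ)`,
which is strictly decreasing in `N s`; hence a greedy step always goes to a least-visited outcome.
Before episode `t` only `t < d` visits have been made, so some outcome is still unvisited and the
greedy outcome is a new one: `x` is injective, hence bijective. Optimality of the resulting uniform
counts is the harmonic–arithmetic mean inequality, here Sedrakyan's lemma.
-/

open Finset

noncomputable def coverage {ι : Type*} [Fintype ι] (lam : ℝ) (n : ι → ℝ) : ℝ :=
  (∑ j, 1 / (n j + lam))⁻¹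

noncomputable def marginalGain (lam m : ℝ) : ℝ :=
  1 / (m + lam) - 1 / (m + 1 + lam)

section
variable {ι : Type*} [Fintype ι]

lemma sum_one_div_add_ite [DecidableEq ι] (lam : ℝ) (n : ι → ℝ) (s : ι) :
    ∑ j, 1 / (n j + (if j = s then 1 else 0) + lam)
      = ∑ j, 1 / (n j + lam) - marginalGain lam (n s) := by
  have hterm : ∀ j, 1 / (n j + (if j = s then 1 else 0) + lam)
      = 1 / (n j + lam) - if j = s then marginalGain lam (n s) else 0 := by
    intro j
    split_ifs with h
    · subst h; rw [marginalGain, add_right_comm]; ring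
    · simp
  simp only [hterm, sum_sub_distrib, sum_ite_eq', mem_univ, if_true]

lemma marginalGain_strictAntiOn (lam : ℝ) : StrictAntiOn (marginalGain lam) (Set.Ioi (-lam)) := by
  intro a ha b hb hab
  simp only [Set.mem_Ioi] at ha hb
  have hform : ∀ m, 0 < m + lam → marginalGain lam m = 1 / ((m + lam) * (m + lam + 1)) := by
    intro m hm
    have hm' : m + 1 + lam ≠ 0 := by linarith
    rw [marginalGain, div_sub_div _ _ hm.ne' hm']
    congr 1 <;> ring
  rw [hform a (by linarith), hform b (by linarith)]
  apply one_div_lt_one_div_of_lt (by nlinarith)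
  nlinarith

lemma le_of_coverage_add_single_le [DecidableEq ι] {lam : ℝ} (hlam : 0 < lam) (n : ι → ℕ)
    (s s' : ι)
    (h : coverage lam (fun j => (n j : ℝ) + if j = s then 1 else 0)
      ≤ coverage lam (fun j => (n j : ℝ) + if j = s' then 1 else 0)) :
    n s' ≤ n s := by
  by_contra! hlt
  have hsum_pos : ∀ r : ι, 0 < ∑ j, 1 / ((n j : ℝ) + (if j = r then 1 else 0) + lam) :=
    fun r => sum_pos (fun j _ => by positivity) ⟨r, mem_univ r⟩
  have hmem : ∀ r, (n r : ℝ) ∈ Set.Ioi (-lam) := fun r => by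
    rw [Set.mem_Ioi]; linarith [(n r).cast_nonneg (α := ℝ)]
  have hgain : marginalGain lam (n s') < marginalGain lam (n s) :=
    marginalGain_strictAntiOn lam (hmem s) (hmem s') (by exact_mod_cast hlt)
  have hlt_cov : coverage lam (fun j => (n j : ℝ) + if j = s' then 1 else 0)
      < coverage lam (fun j => (n j : ℝ) + if j = s then 1 else 0) := by
    refine inv_strictAnti₀ (hsum_pos s) ?_
    rw [sum_one_div_add_ite, sum_one_div_add_ite]
    linarith
  exact hlt_cov.not_ge h

lemma coverage_const (lam a : ℝ) :
    coverage lam (fun _ : ι => a) = (a + lam) / Fintype.card ι := by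
  simp [coverage, div_eq_mul_inv, mul_comm]

lemma coverage_le_sum_div_card_sq {lam : ℝ} (n : ι → ℝ) (hn : ∀ j, 0 < n j + lam) :
    coverage lam n ≤ (∑ j, (n j + lam)) / Fintype.card ι ^ 2 := by
  rcases isEmpty_or_nonempty ι with hι | hι
  · simp [coverage]
  have hsedrakyan := sq_sum_div_le_sum_sq_div univ (fun _ => (1 : ℝ)) (fun j _ => hn j)
  simp only [sum_const, card_univ, nsmul_eq_mul, mul_one, one_pow] at hsedrakyan
  have hsum_pos : 0 < ∑ j, (n j + lam) := sum_pos (fun j _ => hn j) univ_nonempty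
  rw [coverage, ← inv_div]
  exact inv_anti₀ (by positivity) hsedrakyan

lemma coverage_le_of_sum_eq_card {lam : ℝ} (hlam : 0 < lam) (N : ι → ℕ)
    (hN : ∑ j, N j = Fintype.card ι) :
    coverage lam (fun j => (N j : ℝ)) ≤ (1 + lam) / Fintype.card ι := by
  refine (coverage_le_sum_div_card_sq _ fun j => by positivity).trans_eq ?_
  rw [sum_add_distrib, ← Nat.cast_sum, hN, sum_const, card_univ, nsmul_eq_mul]
  rcases eq_or_ne (Fintype.card ι : ℝ) 0 with h0 | h0
  · simp [h0]
  · field_simp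

end

lemma sum_card_filter_lt_and_eq {ι : Type*} [Fintype ι] [DecidableEq ι] {d : ℕ} (x : Fin d → ι)
    (t : Fin d) :
    ∑ j, #{u | u < t ∧ x u = j} = t := by
  simpa [← filter_filter, filter_gt_eq_Iio] using sum_card_fiberwise_eq_card_filter (Iio t) univ x

lemma card_filter_eq_eq_one_of_bijective {α β : Type*} [Fintype α] [DecidableEq β] {f : α → β}
    (hf : Function.Bijective f) (b : β) : #{a | f a = b} = 1 := by
  obtain ⟨a, rfl⟩ := hf.2 b
  exact card_eq_one.2 ⟨a, by ext; simp [hf.1.eq_iff]⟩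

theorem greedy_coverage_policy_is_optimal_general
    (d : ℕ) (lam : ℝ) (hlam : 0 < lam)
    (x : Fin d → Fin d)
    (hgreedy : ∀ t : Fin d, ∀ s : Fin d,
      (∑ j : Fin d,
          1 / (((Finset.univ.filter (fun u : Fin d => u < t ∧ x u = j)).card : ℝ)
                + (if j = s then 1 else 0) + lam))⁻¹
        ≤ (∑ j : Fin d,
          1 / (((Finset.univ.filter (fun u : Fin d => u < t ∧ x u = j)).card : ℝ)
                + (if j = x t then 1 else 0) + lam))⁻¹) :
    Function.Bijective x ∧
    (∀ j : Fin d, (Finset.univ.filter (fun u : Fin d => x u = j)).card = 1) ∧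
    (∀ j : Fin d,
      ((Finset.univ.filter (fun u : Fin d => x u = j)).card : ℝ) / d = 1 / d) ∧
    (∑ j : Fin d,
        1 / (((Finset.univ.filter (fun u : Fin d => x u = j)).card : ℝ) + lam))⁻¹
      = (1 + lam) / d ∧
    (∀ N : Fin d → ℕ, (∑ j : Fin d, N j) = d →
      (∑ j : Fin d, 1 / ((N j : ℝ) + lam))⁻¹ ≤ (1 + lam) / d) := by
  have hnew : ∀ t u : Fin d, u < t → x u ≠ x t := by
    intro t
    obtain ⟨s, -, hs⟩ : ∃ s ∈ univ, #{u | u < t ∧ x u = s} < 1 :=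
      exists_lt_of_sum_lt (by simp [sum_card_filter_lt_and_eq])
    have hfresh : #{u | u < t ∧ x u = x t} = 0 :=
      Nat.lt_one_iff.1 ((le_of_coverage_add_single_le hlam _ s (x t) (hgreedy t s)).trans_lt hs)
    rw [card_eq_zero, filter_eq_empty_iff] at hfresh
    exact fun u hu hxu => hfresh (mem_univ u) ⟨hu, hxu⟩
  have hbij : Function.Bijective x :=
    Finite.injective_iff_bijective.mp (.of_lt_imp_ne fun u t h => hnew t u h)
  have hcount := card_filter_eq_eq_one_of_bijective hbij
  refine ⟨hbij, hcount, fun j => by rw [hcount j, Nat.cast_one], ?_, fun N hN => ?_⟩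
  · simp only [hcount, Nat.cast_one]
    exact (coverage_const lam 1).trans (by rw [Fintype.card_fin])
  · have := coverage_le_of_sum_eq_card hlam N (by rwa [Fintype.card_fin])
    rwa [Fintype.card_fin] at this

/-- Deterministic skeleton of Proposition 1: if at each episode `t` the outcome
`x t` maximizes the post-addition coverage given the counts of outcomes before
episode `t`, then `x` is a bijection of `Fin d`, the final count of each outcome
is `1` (empirical frequency `1/d`), and the final coverage equals `(1+λ)/d`,
which is the maximum coverage over all count vectors with total count `d`. -/
theorem greedy_coverage_policy_is_optimal
    (d : ℕ) (hd : 1 ≤ d) (lam : ℝ) (hlam : 0 < lam)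
    (x : Fin d → Fin d)
    (hgreedy : ∀ t : Fin d, ∀ s : Fin d,
      (∑ j : Fin d,
          1 / (((Finset.univ.filter (fun u : Fin d => u < t ∧ x u = j)).card : ℝ)
                + (if j = s then 1 else 0) + lam))⁻¹
        ≤ (∑ j : Fin d,
          1 / (((Finset.univ.filter (fun u : Fin d => u < t ∧ x u = j)).card : ℝ)
                + (if j = x t then 1 else 0) + lam))⁻¹) :
    Function.Bijective x ∧
    (∀ j : Fin d, (Finset.univ.filter (fun u : Fin d => x u = j)).card = 1) ∧
    (∀ j : Fin d,
      ((Finset.univ.filter (fun u : Fin d => x u = j)).card : ℝ) / d = 1 / d) ∧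
    (∑ j : Fin d,
        1 / (((Finset.univ.filter (fun u : Fin d => x u = j)).card : ℝ) + lam))⁻¹
      = (1 + lam) / d ∧
    (∀ N : Fin d → ℕ, (∑ j : Fin d, N j) = d →
      (∑ j : Fin d, 1 / ((N j : ℝ) + lam))⁻¹ ≤ (1 + lam) / d) :=
  greedy_coverage_policy_is_optimal_general d lam hlam x hgreedy
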